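/- Let V be a nontrivial finite-dimensional real inner product space, L : V → V a self-adjoint positive-definite endomorphism, and τ, ν > 0. Then for every h ∈ V, ‖h‖² + (τν/2)·⟨L h, h⟩ ≤ ⟨(φ₁(τνL))⁻¹ h, h⟩ ≤ ‖h‖² + τν·⟨L h, h⟩. -/

import Mathlib

open scoped RealInnerProductSpace

section Aux

variable {V : Type*} [NormedAddCommGroup V] [InnerProductSpace ℝ V]

/-- If `v` is an eigenvector of `A` with eigenvalue `c`, then it is an eigenvector of
`exp A` with eigenvalue `exp c`. -/
lemma exp_apply_eigen [CompleteSpace V] (A : V →L[ℝ] V) (c : ℝ) (v : V) (hv : A v = c • v) :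
    NormedSpace.exp A v = Real.exp c • v := by
  have hpow : ∀ m : ℕ, (A ^ m) v = c ^ m • v := by
    intro m
    induction m with
    | zero => simp
    | succ m ih =>
      rw [pow_succ, pow_succ, ContinuousLinearMap.mul_apply, hv, map_smul, ih, smul_smul]
      rw [mul_comm]
  have hs : Summable fun m : ℕ => (((m.factorial : ℝ))⁻¹) • A ^ m := NormedSpace.expSeries_summable' A
  have hs' : Summable fun m : ℕ => (((m.factorial : ℝ))⁻¹) * c ^ m := by
    simpa [smul_eq_mul] using NormedSpace.expSeries_summable' (𝕂 := ℝ) c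
  rw [NormedSpace.exp_eq_tsum ℝ]
  have h1 : (∑' m : ℕ, (((m.factorial : ℝ))⁻¹) • A ^ m) v
      = ∑' m : ℕ, ((((m.factorial : ℝ))⁻¹) • A ^ m) v :=
    (ContinuousLinearMap.apply ℝ V v).map_tsum hs
  rw [h1]
  have h2 : ∀ m : ℕ, ((((m.factorial : ℝ))⁻¹) • A ^ m) v = ((((m.factorial : ℝ))⁻¹) * c ^ m) • v := by
    intro m
    rw [ContinuousLinearMap.smul_apply, hpow, smul_smul]
  rw [tsum_congr h2, hs'.tsum_smul_const]
  have h3 : Real.exp c = ∑' m : ℕ, ((m.factorial : ℝ))⁻¹ * c ^ m := by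
    rw [Real.exp_eq_exp_ℝ, NormedSpace.exp_eq_tsum ℝ]
    simp [smul_eq_mul]
  rw [h3]

/-- Quadratic form of an operator diagonal in an orthonormal basis. -/
lemma inner_map_eq_sum {ι : Type*} [Fintype ι] (b : OrthonormalBasis ι ℝ V)
    (A : V →L[ℝ] V) (a : ι → ℝ) (hA : ∀ i, A (b i) = a i • b i) (h : V) :
    ⟪A h, h⟫ = ∑ i, a i * (b.repr h i) ^ 2 := by
  conv_lhs => rw [← b.sum_repr h]
  rw [map_sum, sum_inner]
  refine Finset.sum_congr rfl fun i _ => ?_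
  rw [map_smul, hA i, smul_smul, real_inner_smul_left, ← b.repr_apply_apply, b.sum_repr h]
  ring

lemma key_poly {x : ℝ} (hx : 0 ≤ x) : 2 - x ≤ (2 + x) * Real.exp (-x) := by
  set g : ℝ → ℝ := fun y => (2 + y) * Real.exp (-y) + y with hg
  have hd : ∀ y : ℝ, HasDerivAt g (1 - (1 + y) * Real.exp (-y)) y := by
    intro y
    have h1 : HasDerivAt (fun y : ℝ => Real.exp (-y)) (-Real.exp (-y)) y := by
      simpa using (hasDerivAt_neg y).exp
    have h2 : HasDerivAt (fun y : ℝ => 2 + y) 1 y := by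
      simpa using (hasDerivAt_id y).const_add 2
    have := (h2.mul h1).add (hasDerivAt_id' y)
    rw [show (1:ℝ) - (1 + y) * Real.exp (-y) = 1 * Real.exp (-y) + (2 + y) * -Real.exp (-y) + 1 by ring]
    exact this
  have hmono : MonotoneOn g (Set.Ici (0:ℝ)) := by
    apply monotoneOn_of_deriv_nonneg (convex_Ici 0)
    · exact Continuous.continuousOn (by continuity)
    · intro y _
      exact (hd y).differentiableAt.differentiableWithinAt
    · intro y hy
      rw [(hd y).deriv]
      have hyn : (1 + y) * Real.exp (-y) ≤ 1 := by
        have h1 : y + 1 ≤ Real.exp y := Real.add_one_le_exp y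
        have h2 : Real.exp (-y) * Real.exp y = 1 := by
          rw [← Real.exp_add]; simp
        nlinarith [Real.exp_pos (-y)]
      linarith
  have h0 : (2 : ℝ) ≤ (2 + x) * Real.exp (-x) + x := by
    have := hmono Set.self_mem_Ici hx hx
    simpa [hg] using this
  linarith

lemma scalar_bounds {x : ℝ} (hx : 0 < x) :
    1 + x / 2 ≤ x / (1 - Real.exp (-x)) ∧ x / (1 - Real.exp (-x)) ≤ 1 + x := by
  have hE : Real.exp (-x) < 1 := by
    have := Real.exp_lt_exp.mpr (show -x < 0 by linarith)
    simpa using this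
  have hd : 0 < 1 - Real.exp (-x) := by linarith
  constructor
  · rw [le_div_iff₀ hd]
    have key := key_poly hx.le
    nlinarith
  · rw [div_le_iff₀ hd]
    have h1 : x + 1 ≤ Real.exp x := Real.add_one_le_exp x
    have h2 : Real.exp (-x) * Real.exp x = 1 := by rw [← Real.exp_add]; simp
    nlinarith [Real.exp_pos (-x), Real.exp_pos x]

end Aux

/-- Two-sided bound for the inverse of `φ₁(τνL)`:
`‖h‖² + (τν/2)⟨L h, h⟩ ≤ ⟨(φ₁(τνL))⁻¹ h, h⟩ ≤ ‖h‖² + τν⟨L h, h⟩`.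
`φ` plays the role of `φ₁(τνL)`, characterized by the defining identity
`(τν) • (L ∘ φ) = id - exp(-(τν)L)`, and `ψ` is its inverse. -/
theorem phi1_inv_op_two_sided_bound
    {V : Type*} [NormedAddCommGroup V] [InnerProductSpace ℝ V]
    [FiniteDimensional ℝ V] [Nontrivial V]
    (L : V →L[ℝ] V) (hL : IsSelfAdjoint L)
    (hLpos : ∀ h : V, h ≠ 0 → 0 < ⟪L h, h⟫)
    (τ ν : ℝ) (hτ : 0 < τ) (hν : 0 < ν)
    (φ ψ : V →L[ℝ] V)
    (hφ : (τ * ν) • (L ∘L φ) = 1 - NormedSpace.exp (-(τ * ν) • L))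
    (hψ₁ : φ ∘L ψ = 1) (hψ₂ : ψ ∘L φ = 1) :
    ∀ h : V,
      ‖h‖ ^ 2 + τ * ν / 2 * ⟪L h, h⟫ ≤ ⟪ψ h, h⟫ ∧
      ⟪ψ h, h⟫ ≤ ‖h‖ ^ 2 + τ * ν * ⟪L h, h⟫ := by
  have hτν : 0 < τ * ν := mul_pos hτ hν
  have hL' : (L : V →ₗ[ℝ] V).IsSymmetric := hL.isSymmetric
  set n := Module.finrank ℝ V with hndef
  have hn : Module.finrank ℝ V = n := rfl
  set b := hL'.eigenvectorBasis hn with hbdef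
  set μ := hL'.eigenvalues hn with hμdef
  have hb : ∀ i, L (b i) = μ i • b i := fun i => hL'.apply_eigenvectorBasis hn i
  have hbne : ∀ i, b i ≠ 0 := fun i => by
    simpa using (b.toBasis.ne_zero i)
  have hbnorm : ∀ i, ‖b i‖ = 1 := fun i => b.orthonormal.1 i
  have hμpos : ∀ i, 0 < μ i := by
    intro i
    have h0 := hLpos (b i) (hbne i)
    rw [hb i, real_inner_smul_left, real_inner_self_eq_norm_sq, hbnorm i] at h0
    simpa using h0
  set E := NormedSpace.exp (-(τ * ν) • L) with hEdef
  have hE : ∀ i, E (b i) = Real.exp (-(τ * ν * μ i)) • b i := by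
    intro i
    apply exp_apply_eigen
    rw [ContinuousLinearMap.smul_apply, hb i, smul_smul]
    congr 1
    ring
  -- L and φ are injective, hence so is 1 - E
  have hLinj : Function.Injective L := by
    intro u v huv
    by_contra hne
    have h0 : u - v ≠ 0 := sub_ne_zero.mpr hne
    have := hLpos (u - v) h0
    rw [map_sub, huv, sub_self] at this
    simp at this
  have hφinj : Function.Injective φ := by
    intro u v huv
    have : ψ (φ u) = ψ (φ v) := by rw [huv]
    simpa [← ContinuousLinearMap.comp_apply, hψ₂] using this
  have hsubinj : Function.Injective (1 - E : V →L[ℝ] V) := by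
    rw [← hφ]
    intro u v huv
    simp only [ContinuousLinearMap.smul_apply, ContinuousLinearMap.comp_apply] at huv
    have h1 : L (φ u) = L (φ v) := by
      have := smul_right_injective V (ne_of_gt hτν) huv
      exact this
    exact hφinj (hLinj h1)
  -- key identity: (τν) • L = (1 - E) ∘ ψ
  have hkey : (τ * ν) • L = (1 - E) ∘L ψ := by
    have h := congrArg (fun A : V →L[ℝ] V => A ∘L ψ) hφ
    simp only [ContinuousLinearMap.smul_comp, ContinuousLinearMap.comp_assoc, hψ₁,
      ContinuousLinearMap.comp_id] at h
    simpa [ContinuousLinearMap.one_def] using h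
  -- the eigenvalues of ψ
  set c : Fin n → ℝ := fun i => (τ * ν * μ i) / (1 - Real.exp (-(τ * ν * μ i))) with hcdef
  have hxpos : ∀ i, 0 < τ * ν * μ i := fun i => mul_pos hτν (hμpos i)
  have hdenpos : ∀ i, 0 < 1 - Real.exp (-(τ * ν * μ i)) := by
    intro i
    have := Real.exp_lt_exp.mpr (show -(τ * ν * μ i) < 0 by linarith [hxpos i])
    simp only [Real.exp_zero] at this
    linarith
  have hψb : ∀ i, ψ (b i) = c i • b i := by
    intro i
    apply hsubinj
    have h1 : (1 - E) (ψ (b i)) = (τ * ν * μ i) • b i := by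
      have h := congrArg (fun A : V →L[ℝ] V => A (b i)) hkey
      simp only [ContinuousLinearMap.smul_apply, ContinuousLinearMap.comp_apply] at h
      rw [hb i, smul_smul] at h
      exact h.symm
    have hci : c i * (1 - Real.exp (-(τ * ν * μ i))) = τ * ν * μ i := by
      simp only [hcdef]
      exact div_mul_cancel₀ _ (ne_of_gt (hdenpos i))
    have h2 : (1 - E) (c i • b i) = (τ * ν * μ i) • b i := by
      rw [map_smul, ContinuousLinearMap.sub_apply, ContinuousLinearMap.one_apply, hE i,
        smul_sub, smul_smul, ← sub_smul]
      congr 1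
      ring_nf at hci ⊢
      linarith [hci]
    rw [h1, h2]
  intro h
  have hnorm : ‖h‖ ^ 2 = ∑ i, (b.repr h i) ^ 2 := by
    rw [← real_inner_self_eq_norm_sq]
    have := inner_map_eq_sum b 1 (fun _ => (1:ℝ)) (by simp) h
    simpa using this
  have hLsum : ⟪L h, h⟫ = ∑ i, μ i * (b.repr h i) ^ 2 := inner_map_eq_sum b L μ hb h
  have hψsum : ⟪ψ h, h⟫ = ∑ i, c i * (b.repr h i) ^ 2 := inner_map_eq_sum b ψ c hψb h
  constructor
  · rw [hnorm, hLsum, hψsum, Finset.mul_sum, ← Finset.sum_add_distrib]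
    apply Finset.sum_le_sum
    intro i _
    have hsc := (scalar_bounds (hxpos i)).1
    have hsq : (0:ℝ) ≤ (b.repr h i) ^ 2 := sq_nonneg _
    have := mul_le_mul_of_nonneg_right hsc hsq
    calc (b.repr h i) ^ 2 + τ * ν / 2 * (μ i * (b.repr h i) ^ 2)
        = (1 + τ * ν * μ i / 2) * ((b.repr h i) ^ 2) := by ring
      _ ≤ c i * (b.repr h i) ^ 2 := this
  · rw [hnorm, hLsum, hψsum, Finset.mul_sum, ← Finset.sum_add_distrib]
    apply Finset.sum_le_sum
    intro i _
    have hsc := (scalar_bounds (hxpos i)).2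
    have hsq : (0:ℝ) ≤ (b.repr h i) ^ 2 := sq_nonneg _
    have := mul_le_mul_of_nonneg_right hsc hsq
    calc c i * (b.repr h i) ^ 2
        ≤ (1 + τ * ν * μ i) * ((b.repr h i) ^ 2) := this
      _ = (b.repr h i) ^ 2 + τ * ν * (μ i * (b.repr h i) ^ 2) := by ring
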